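/- Let μ ≥ 1, ℓ ≥ 0, m ≥ 0 be integers, set M = 2ℓ + 4m + 3 and σ = −(2ℓ + 2m + 2)·k. Then for every pair (κ, λ) ∈ {(0,1), (1,1)} and every integer k with gcd(k, M) = 1, one has H_M( q^σ · f((−1)^κ q^k, (−1)^κ q^{μM−k})^{2ℓ+1} · f((−1)^λ q^{μM+2k}, (−1)^λ q^{μM−2k})^{2m+1} ) = 0. -/

import Mathlib

/-!
Common setup: Ramanujan theta series as formal Laurent series over `ℚ`
(`LaurentSeries ℚ = HahnSeries ℤ ℚ`), and the huffing operator `H_M`.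
-/

noncomputable section

open scoped Classical

namespace ThetaVanish

/-- A subset of `ℤ` that is bounded below is partially well-ordered. -/
theorem isPWO_of_subset_Ici {a : ℤ} {s : Set ℤ} (h : s ⊆ Set.Ici a) : s.IsPWO := by
  have hWF : s.IsWF := by
    rw [Set.isWF_iff_no_descending_seq]
    intro f hf hmem
    have key : ∀ n : ℕ, f n + n ≤ f 0 := by
      intro n
      induction n with
      | zero => simp
      | succ k ih =>
        have h2 : f (k + 1) < f k := hf (Nat.lt_succ_self k)
        push_cast
        push_cast at ih
        omega
    have h1 := key (f 0 - a + 1).toNat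
    have h2 : a ≤ f ((f 0 - a + 1).toNat) := h (hmem _)
    have h3 : a ≤ f 0 := h (hmem 0)
    omega
  exact hWF.isPWO

/-- The coefficient of `q^N` in Ramanujan's theta series `f(ε q^r, ε q^s)`:
the (finite, when `r + s > 0`) sum of `ε^n` over all integers `n` with
`r·n(n+1)/2 + s·n(n-1)/2 = N`. -/
def thetaCoeff (ε r s : ℤ) : ℤ → ℚ := fun N =>
  ∑ᶠ n : ℤ, if r * (n * (n + 1) / 2) + s * (n * (n - 1) / 2) = N then (ε : ℚ) ^ n else 0

theorem thetaCoeff_support (ε r s : ℤ) (h : 0 < r + s) :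
    Function.support (thetaCoeff ε r s) ⊆ Set.Ici (-(r - s) ^ 2) := by
  intro N hN
  simp only [Function.mem_support, ne_eq] at hN
  rw [Set.mem_Ici]
  by_contra hcon
  push_neg at hcon
  apply hN
  apply finsum_eq_zero_of_forall_eq_zero
  intro n
  rw [if_neg]
  intro hQ
  obtain ⟨c, hc⟩ := Int.even_mul_succ_self n
  obtain ⟨e, he⟩ := Int.even_mul_pred_self n
  have hc' : n * (n + 1) = 2 * c := by omega
  have he' : n * (n - 1) = 2 * e := by omega
  have e1 : n * (n + 1) / 2 = c := by omega
  have e2 : n * (n - 1) / 2 = e := by omega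
  rw [e1, e2] at hQ
  have key : 2 * N = (r + s) * n ^ 2 + (r - s) * n := by
    linear_combination -2 * hQ - r * hc' - s * he'
  nlinarith [sq_nonneg (2 * n + r - s), sq_nonneg (r - s),
    mul_nonneg (show (0:ℤ) ≤ r + s - 1 by omega) (sq_nonneg n)]

/-- Ramanujan's theta series `f(ε q^r, ε q^s)` (for a sign `ε ∈ {1, -1}` and
`r + s > 0`), as a formal Laurent series over `ℚ`; junk value `0` if `r + s ≤ 0`. -/
def theta (ε r s : ℤ) : LaurentSeries ℚ :=
  if h : 0 < r + s then
    { coeff := thetaCoeff ε r s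
      isPWO_support' := isPWO_of_subset_Ici (thetaCoeff_support ε r s h) }
  else 0

/-- The huffing operator `H_M`: keep only the coefficients whose index is a
multiple of `M`. -/
def huff (M : ℤ) (G : LaurentSeries ℚ) : LaurentSeries ℚ where
  coeff N := if M ∣ N then G.coeff N else 0
  isPWO_support' := by
    apply Set.IsPWO.mono G.isPWO_support
    intro N hN
    simp only [Function.mem_support, ne_eq] at hN
    rw [HahnSeries.mem_support]
    by_cases hd : M ∣ N
    · rwa [if_pos hd] at hN
    · exact absurd (if_neg hd) hN


/-!
Expanding every theta factor, the coefficient of `q^N` in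
`f(ε q^k, ε q^{P-k})^A · f(-q^{P+2k}, -q^{P-2k})^B` (with `P = μM`, `A = 2ℓ+1`, `B = 2m+1`)
is a signed count of tuples `(v, w) ∈ ℤ^A × ℤ^B`. If `M ∣ N + σ`, then reducing the doubled
exponent modulo `M` and using `gcd(k, M) = 1` shows that `2 Σ vᵢ + 4 Σ wⱼ - A = M t` for an
integer `t`, which is odd. The reflection `vᵢ ↦ t + 1 - vᵢ`, `wⱼ ↦ t - wⱼ` is then an
involution of the tuples contributing to `q^N`; it preserves the exponent and, as `B` and `t`
are odd, reverses the sign, so these contributions cancel in pairs.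
-/

end ThetaVanish

theorem finsum_eq_zero_of_neg_involution {α M : Type*} [AddCommGroup M] [IsAddTorsionFree M]
    {f : α → M} (g : α → α) (hneg : ∀ a, f a ≠ 0 → f (g a) = -f a)
    (hinv : ∀ a, f a ≠ 0 → g (g a) = a) : ∑ᶠ a, f a = 0 := by
  by_cases hfin : (Function.support f).Finite
  · rw [finsum_eq_sum f hfin]
    have hmem : ∀ a, a ∈ hfin.toFinset ↔ f a ≠ 0 := by simp
    refine Finset.sum_involution (fun a _ => g a) (fun a ha => ?_) (fun a ha hfa hfix => ?_)
      (fun a ha => ?_) (fun a ha => hinv a ((hmem a).1 ha))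
    · rw [hneg a ((hmem a).1 ha), add_neg_cancel]
    · have hfa' := hneg a hfa
      rw [hfix] at hfa'
      exact hfa (self_eq_neg.mp hfa')
    · rw [hmem, hneg a ((hmem a).1 ha), neg_ne_zero]
      exact (hmem a).1 ha
  · exact finsum_of_infinite_support hfin

namespace HahnSeries

theorem prod_single {Γ R ι : Type*} [AddCommMonoid Γ] [PartialOrder Γ]
    [IsOrderedCancelAddMonoid Γ] [CommSemiring R] (s : Finset ι) (e : ι → Γ) (c : ι → R) :
    ∏ i ∈ s, single (e i) (c i) = single (∑ i ∈ s, e i) (∏ i ∈ s, c i) := by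
  induction s using Finset.cons_induction with
  | empty => simp
  | cons a s ha ih =>
    rw [Finset.prod_cons, ih, single_mul_single, Finset.sum_cons, Finset.prod_cons]

namespace SummableFamily

variable {Γ R α : Type*}

section Monomials

variable [PartialOrder Γ] [AddCommMonoid R]

def ofMonomials (e : α → Γ) (c : α → R) (he : (Set.range e).IsPWO)
    (hfin : ∀ g, {a | e a = g}.Finite) : SummableFamily Γ R α where
  toFun a := HahnSeries.single (e a) (c a)
  isPWO_iUnion_support' := he.mono <| Set.iUnion_subset fun a =>
    support_single_subset.trans (Set.singleton_subset_iff.2 (Set.mem_range_self a))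
  finite_co_support' g := (hfin g).subset fun a ha => by
    by_contra hne
    exact ha (coeff_single_of_ne (Ne.symm hne))

theorem ofMonomials_apply (e : α → Γ) (c : α → R) (he : (Set.range e).IsPWO)
    (hfin : ∀ g, {a | e a = g}.Finite) (a : α) :
    ofMonomials e c he hfin a = HahnSeries.single (e a) (c a) :=
  rfl

theorem coeff_hsum_of_forall_eq_single [DecidableEq Γ] {s : SummableFamily Γ R α} {e : α → Γ}
    {c : α → R} (hs : ∀ a, s a = HahnSeries.single (e a) (c a)) (g : Γ) :
    s.hsum.coeff g = ∑ᶠ a, if e a = g then c a else 0 :=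
  finsum_congr fun a => by
    rw [hs]
    split_ifs with h
    · rw [h, coeff_single_same]
    · exact coeff_single_of_ne (Ne.symm h)

end Monomials

section FinPow

variable [AddCommMonoid Γ] [PartialOrder Γ] [IsOrderedCancelAddMonoid Γ] [CommSemiring R]

def finPow (s : SummableFamily Γ R α) : (n : ℕ) → SummableFamily Γ R (Fin n → α)
  | 0 => const _ 1
  | n + 1 => Equiv (Fin.consEquiv fun _ => α) (s.mul (s.finPow n))

theorem finPow_apply (s : SummableFamily Γ R α) (n : ℕ) (f : Fin n → α) :
    s.finPow n f = ∏ i, s (f i) := by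
  induction n with
  | zero => simp [finPow]
  | succ n ih =>
    simp only [finPow, Equiv_toFun, Fin.consEquiv_symm_apply, mul_toFun, ih, Fin.prod_univ_succ]
    rfl

theorem hsum_finPow (s : SummableFamily Γ R α) (n : ℕ) : (s.finPow n).hsum = s.hsum ^ n := by
  induction n with
  | zero => simp [finPow]
  | succ n ih => rw [finPow, hsum_equiv, hsum_mul, ih, pow_succ']

end FinPow

end SummableFamily

end HahnSeries

namespace ThetaVanish

open HahnSeries SummableFamily

theorem huff_eq_zero {M : ℤ} {G : LaurentSeries ℚ} (h : ∀ N, M ∣ N → G.coeff N = 0) :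
    huff M G = 0 := by
  ext N
  change (if M ∣ N then G.coeff N else 0) = 0
  split_ifs with hN
  exacts [h N hN, rfl]

def thetaExponent (r s n : ℤ) : ℤ := r * (n * (n + 1) / 2) + s * (n * (n - 1) / 2)

theorem two_mul_thetaExponent (r s n : ℤ) :
    2 * thetaExponent r s n = (r + s) * n ^ 2 + (r - s) * n := by
  obtain ⟨a, ha⟩ := Int.even_mul_succ_self n
  obtain ⟨b, hb⟩ := Int.even_mul_pred_self n
  have ha' : n * (n + 1) / 2 = a := by omega
  have hb' : n * (n - 1) / 2 = b := by omega
  rw [thetaExponent, ha', hb']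
  linear_combination (-r) * ha + (-s) * hb

theorem two_mul_thetaExponent_sub (r s t n : ℤ) :
    2 * thetaExponent r s (t - n) =
      2 * thetaExponent r s n + ((r + s) * t + r - s) * (t - 2 * n) := by
  rw [two_mul_thetaExponent, two_mul_thetaExponent]
  ring

theorem neg_sq_sub_le_thetaExponent {r s : ℤ} (h : 0 < r + s) (n : ℤ) :
    -(r - s) ^ 2 ≤ thetaExponent r s n := by
  have := two_mul_thetaExponent r s n
  nlinarith [sq_nonneg (2 * n + (r - s)), sq_nonneg (r - s),
    mul_nonneg (show (0 : ℤ) ≤ r + s - 1 by omega) (sq_nonneg n)]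

theorem finite_thetaExponent_fiber {r s : ℤ} (h : 0 < r + s) (N : ℤ) :
    {n | thetaExponent r s n = N}.Finite := by
  refine (Set.finite_Icc (-(2 * |N| + |r - s|)) (2 * |N| + |r - s|)).subset fun n hn => ?_
  have h2 := two_mul_thetaExponent r s n
  rw [show thetaExponent r s n = N from hn] at h2
  rw [Set.mem_Icc, ← abs_le]
  by_contra! hK
  have hsq : |n| * |n| ≤ 2 * |N| + |r - s| * |n| := by
    nlinarith [abs_mul_abs_self n, abs_mul (r - s) n, neg_abs_le ((r - s) * n), le_abs_self N,
      mul_nonneg (show (0 : ℤ) ≤ r + s - 1 by omega) (sq_nonneg n)]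
  nlinarith [abs_nonneg N, abs_nonneg (r - s)]

def thetaFamily (ε r s : ℤ) (h : 0 < r + s) : SummableFamily ℤ ℚ ℤ :=
  ofMonomials (thetaExponent r s) (fun n => (ε : ℚ) ^ n)
    (isPWO_of_subset_Ici (Set.range_subset_iff.2 (neg_sq_sub_le_thetaExponent h)))
    (finite_thetaExponent_fiber h)

theorem theta_eq_hsum (ε r s : ℤ) (h : 0 < r + s) : theta ε r s = (thetaFamily ε r s h).hsum := by
  ext N
  rw [coeff_hsum_of_forall_eq_single (s := thetaFamily ε r s h) (fun _ => ofMonomials_apply ..),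
    theta, dif_pos h]
  rfl

section Tuples

variable {A B : ℕ}

def prodExponent (r₁ s₁ r₂ s₂ : ℤ) (p : (Fin A → ℤ) × (Fin B → ℤ)) : ℤ :=
  ∑ i, thetaExponent r₁ s₁ (p.1 i) + ∑ j, thetaExponent r₂ s₂ (p.2 j)

def prodSign (ε₁ ε₂ : ℚ) (p : (Fin A → ℤ) × (Fin B → ℤ)) : ℚ :=
  (∏ i, ε₁ ^ p.1 i) * ∏ j, ε₂ ^ p.2 j

theorem coeff_theta_pow_mul_theta_pow {ε₁ r₁ s₁ ε₂ r₂ s₂ : ℤ} (h₁ : 0 < r₁ + s₁)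
    (h₂ : 0 < r₂ + s₂) (N : ℤ) :
    (theta ε₁ r₁ s₁ ^ A * theta ε₂ r₂ s₂ ^ B).coeff N =
      ∑ᶠ p : (Fin A → ℤ) × (Fin B → ℤ),
        if prodExponent r₁ s₁ r₂ s₂ p = N then prodSign ε₁ ε₂ p else 0 := by
  rw [theta_eq_hsum ε₁ r₁ s₁ h₁, theta_eq_hsum ε₂ r₂ s₂ h₂, ← hsum_finPow, ← hsum_finPow,
    ← hsum_mul]
  refine coeff_hsum_of_forall_eq_single (fun p => ?_) N
  simp only [mul_toFun, finPow_apply, thetaFamily, ofMonomials_apply, prod_single,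
    single_mul_single]
  rfl

def weight (p : (Fin A → ℤ) × (Fin B → ℤ)) : ℤ := 2 * ∑ i, p.1 i + 4 * ∑ j, p.2 j - A

def reflect (t : ℤ) (p : (Fin A → ℤ) × (Fin B → ℤ)) : (Fin A → ℤ) × (Fin B → ℤ) :=
  (fun i => t + 1 - p.1 i, fun j => t - p.2 j)

theorem reflect_reflect (t : ℤ) (p : (Fin A → ℤ) × (Fin B → ℤ)) : reflect t (reflect t p) = p := by
  ext <;> simp [reflect]

theorem weight_reflect (t : ℤ) (p : (Fin A → ℤ) × (Fin B → ℤ)) :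
    weight (reflect t p) = 2 * (A + 2 * B) * t - weight p := by
  simp only [weight, reflect, Finset.sum_sub_distrib, Finset.sum_const, Finset.card_univ,
    Fintype.card_fin, nsmul_eq_mul]
  ring

theorem odd_weight (hA : Odd A) (p : (Fin A → ℤ) × (Fin B → ℤ)) : Odd (weight p) := by
  rw [weight, show ∀ a b : ℤ, 2 * a + 4 * b = 2 * (a + 2 * b) from fun a b => by ring]
  exact (even_two_mul _).sub_odd (by exact_mod_cast hA)

theorem two_mul_sum_thetaExponent (r s : ℤ) {n : ℕ} (v : Fin n → ℤ) :
    2 * ∑ i, thetaExponent r s (v i) = (r + s) * ∑ i, v i ^ 2 + (r - s) * ∑ i, v i := by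
  simp only [Finset.mul_sum, two_mul_thetaExponent, Finset.sum_add_distrib]

theorem two_mul_prodExponent_reflect (P k t : ℤ) (p : (Fin A → ℤ) × (Fin B → ℤ)) :
    2 * prodExponent k (P - k) (P + 2 * k) (P - 2 * k) (reflect t p) =
      2 * prodExponent k (P - k) (P + 2 * k) (P - 2 * k) p
        + (P * t + 2 * k) * ((A + 2 * B) * t - weight p) := by
  simp only [prodExponent, reflect, mul_add, Finset.mul_sum, two_mul_thetaExponent_sub]
  simp only [Finset.sum_add_distrib, ← Finset.mul_sum, Finset.sum_sub_distrib, Finset.sum_const,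
    Finset.card_univ, Fintype.card_fin, nsmul_eq_mul, weight]
  ring

theorem dvd_weight {M P k σ : ℤ} (hM : M = A + 2 * B) (hσ : σ = -(A + B) * k) (hP : M ∣ P)
    (hk : IsCoprime k M) {p : (Fin A → ℤ) × (Fin B → ℤ)}
    (hp : M ∣ σ + prodExponent k (P - k) (P + 2 * k) (P - 2 * k) p) : M ∣ weight p := by
  have key : k * weight p = 2 * (σ + prodExponent k (P - k) (P + 2 * k) (P - 2 * k) p)
      - P * (∑ i, p.1 i ^ 2 - ∑ i, p.1 i + 2 * ∑ j, p.2 j ^ 2) + k * M := by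
    rw [mul_add 2 σ, prodExponent, mul_add, two_mul_sum_thetaExponent,
      two_mul_sum_thetaExponent, weight, hσ, hM]
    ring
  have hkw : M ∣ k * weight p :=
    key ▸ ((hp.mul_left 2).sub (hP.mul_right _)).add (dvd_mul_left M k)
  exact hk.symm.dvd_of_dvd_mul_left hkw

theorem zpow_add_one_sub_of_odd {K : Type*} [DivisionRing K] {ε : K} (hε : ε = 1 ∨ ε = -1)
    {t : ℤ} (ht : Odd t) (n : ℤ) : ε ^ (t + 1 - n) = ε ^ n := by
  rcases hε with rfl | rfl
  · simp
  rw [show t + 1 - n = (t + 1 - 2 * n) + n by ring, zpow_add₀ (by norm_num),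
    Even.neg_one_zpow (ht.add_one.sub (even_two_mul n)), one_mul]

theorem neg_one_zpow_sub_of_odd {K : Type*} [DivisionRing K] {t : ℤ} (ht : Odd t) (n : ℤ) :
    (-1 : K) ^ (t - n) = -(-1) ^ n := by
  rw [show t - n = (t - 2 * n) + n by ring, zpow_add₀ (by norm_num),
    Odd.neg_one_zpow (ht.sub_even (even_two_mul n)), neg_one_mul]

theorem prodSign_reflect {ε : ℚ} (hε : ε = 1 ∨ ε = -1) (hB : Odd B) {t : ℤ} (ht : Odd t)
    (p : (Fin A → ℤ) × (Fin B → ℤ)) : prodSign ε (-1) (reflect t p) = -prodSign ε (-1) p := by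
  simp only [prodSign, reflect, zpow_add_one_sub_of_odd hε ht, neg_one_zpow_sub_of_odd ht,
    Finset.prod_neg, Finset.card_univ, Fintype.card_fin, hB.neg_one_pow]
  ring

theorem finsum_prodSign_eq_zero {M P k σ N : ℤ} {ε : ℚ} (hA : Odd A) (hB : Odd B)
    (hM : M = A + 2 * B) (hσ : σ = -(A + B) * k) (hP : M ∣ P) (hk : IsCoprime k M)
    (hε : ε = 1 ∨ ε = -1) (hN : M ∣ σ + N) :
    ∑ᶠ p : (Fin A → ℤ) × (Fin B → ℤ),
      (if prodExponent k (P - k) (P + 2 * k) (P - 2 * k) p = N then prodSign ε (-1) p else 0)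
      = 0 := by
  set E : (Fin A → ℤ) × (Fin B → ℤ) → ℤ := prodExponent k (P - k) (P + 2 * k) (P - 2 * k)
  have hM0 : M ≠ 0 := by have := hB.pos; omega
  have center : ∀ p, E p = N → ∃ t, weight p = M * t ∧ Odd t := by
    intro p hp
    obtain ⟨t, ht⟩ := dvd_weight hM hσ hP hk (hp ▸ hN : M ∣ σ + E p)
    exact ⟨t, ht, (Int.odd_mul.mp (ht ▸ odd_weight hA p)).2⟩
  refine finsum_eq_zero_of_neg_involution (fun p => reflect (weight p / M) p)
    (fun p hp => ?_) (fun p hp => ?_)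
  all_goals
    have hpN : E p = N := by by_contra h; exact hp (if_neg h)
    obtain ⟨t, hwt, ht⟩ := center p hpN
    rw [hwt, Int.mul_ediv_cancel_left t hM0]
  · have hE : E (reflect t p) = N := by
      have : 2 * E (reflect t p) = 2 * E p + (P * t + 2 * k) * ((A + 2 * B) * t - weight p) :=
        two_mul_prodExponent_reflect P k t p
      rw [hwt, ← hM, sub_self, mul_zero, add_zero] at this
      omega
    rw [if_pos hE, if_pos hpN, prodSign_reflect hε hB ht]
  · rw [weight_reflect, hwt, ← hM, show 2 * M * t - M * t = M * t by ring,
      Int.mul_ediv_cancel_left t hM0, reflect_reflect]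

end Tuples

/-- **Theorem (Type I.2, eq. (1.8))**: with `M = 2ℓ + 4m + 3` and
`σ = -(2ℓ + 2m + 2)k`, for `(κ, λ) ∈ {(0,1), (1,1)}` and `gcd(k, M) = 1`,
`H_M(q^σ · f((-1)^κ q^k, (-1)^κ q^{μM-k})^{2ℓ+1} ·
  f((-1)^λ q^{μM+2k}, (-1)^λ q^{μM-2k})^{2m+1}) = 0`. -/
theorem statement4 (μ ℓ m k M σ : ℤ) (hμ : 1 ≤ μ) (hℓ : 0 ≤ ℓ) (hm : 0 ≤ m)
    (hM : M = 2 * ℓ + 4 * m + 3) (hσ : σ = -(2 * ℓ + 2 * m + 2) * k)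
    (κ lam : ℕ) (hκlam : (κ = 0 ∧ lam = 1) ∨ (κ = 1 ∧ lam = 1))
    (hk : Int.gcd k M = 1) :
    huff M (HahnSeries.single σ (1 : ℚ)
      * theta ((-1) ^ κ) k (μ * M - k) ^ (2 * ℓ + 1)
      * theta ((-1) ^ lam) (μ * M + 2 * k) (μ * M - 2 * k) ^ (2 * m + 1)) = 0 := by
  lift ℓ to ℕ using hℓ
  lift m to ℕ using hm
  have hμM : 0 < μ * M := mul_pos (by omega) (by omega)
  have hε : (((-1) ^ κ : ℤ) : ℚ) = 1 ∨ (((-1) ^ κ : ℤ) : ℚ) = -1 := by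
    rcases hκlam with ⟨rfl, -⟩ | ⟨rfl, -⟩ <;> norm_num
  obtain rfl : lam = 1 := by omega
  rw [show 2 * (ℓ : ℤ) + 1 = ((2 * ℓ + 1 : ℕ) : ℤ) by push_cast; ring,
    show 2 * (m : ℤ) + 1 = ((2 * m + 1 : ℕ) : ℤ) by push_cast; ring, zpow_natCast, zpow_natCast,
    mul_assoc]
  refine huff_eq_zero fun N hN => ?_
  rw [HahnSeries.coeff_single_mul, one_mul, coeff_theta_pow_mul_theta_pow (by omega) (by omega),
    pow_one, Int.cast_neg, Int.cast_one]
  exact finsum_prodSign_eq_zero (σ := σ) (odd_two_mul_add_one ℓ) (odd_two_mul_add_one m)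
    (by push_cast; omega) (by push_cast; linear_combination hσ) (dvd_mul_left M μ)
    (Int.isCoprime_iff_gcd_eq_one.mpr hk) hε (by rwa [add_sub_cancel])

end ThetaVanish
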